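/- arXiv:2101.04069 — 3 statements merged into one kernel-verified Lean document; each statement's English description precedes it below -/
import Mathlib

section
/- Let f = Σ_{α ∈ F'} c_α x^α ∈ ℂ[x₁,…,xₙ] be a Thom–Sebastiani polynomial. Then the extended Jacobian ideal J̃_f = ⟨∂f/∂x₁,…,∂f/∂xₙ, f⟩ equals the ideal generated by the monomials {x^γ : γ ∈ δ(F')}, where δ(F') = {α − e_i : α ∈ F', α_i > 0}. In particular J̃_f is a monomial ideal and f ∈ J_f. -/
open MvPolynomial

/-- `δ(F)`: the set of all `α - e_i` for `α ∈ F` and `i` with `α i > 0`. -/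
def deltaSet {n : ℕ} (F : Set (Fin n → ℕ)) : Set (Fin n → ℕ) :=
  {γ | ∃ α ∈ F, ∃ i : Fin n, α i ≠ 0 ∧ γ = α - Pi.single i 1}

/-- The monomial `x^β` with coefficient `c`, for `β : Fin n → ℕ`. -/
noncomputable def mono {n : ℕ} (β : Fin n → ℕ) (c : ℂ) : MvPolynomial (Fin n) ℂ :=
  monomial (Finsupp.equivFunOnFinite.symm β) c

/-- The Jacobian ideal `J_f = ⟨∂f/∂x₁, …, ∂f/∂xₙ⟩`. -/
noncomputable def jacobianIdeal {n : ℕ} (f : MvPolynomial (Fin n) ℂ) :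
    Ideal (MvPolynomial (Fin n) ℂ) :=
  Ideal.span (Set.range fun i => pderiv i f)

/-!
Disjointness of the supports makes `∂f/∂xᵢ` a single term: if `i ∈ [α]` then
`∂f/∂xᵢ = c_α α_i x^(α - e_i)`, and `∂f/∂xᵢ = 0` if `i` lies in no support. Hence `J_f` is
exactly the monomial ideal of `δ(F')`, and the Euler-type identity
`c_α x^α = α_i⁻¹ · xᵢ ∂f/∂xᵢ` puts every term of `f`, hence `f` itself, in `J_f`.
-/

namespace ThomSebastiani

variable {n : ℕ}

lemma pderiv_mem_jacobianIdeal (f : MvPolynomial (Fin n) ℂ) (i : Fin n) :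
    pderiv i f ∈ jacobianIdeal f :=
  Ideal.subset_span ⟨i, rfl⟩

lemma C_mul_mono (β : Fin n → ℕ) (a b : ℂ) : C a * mono β b = mono β (a * b) :=
  C_mul_monomial

lemma mono_mul_X (β : Fin n → ℕ) (a : ℂ) (i : Fin n) :
    mono β a * X i = mono (β + Pi.single i 1) a := by
  rw [mono, mono, X, monomial_mul, mul_one]
  refine congrArg (monomial · a) (Finsupp.ext fun j ↦ ?_)
  simp [Finsupp.single_eq_pi_single]

lemma mono_sub_single_mul_X {β : Fin n → ℕ} {i : Fin n} (hi : β i ≠ 0) (a : ℂ) :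
    mono (β - Pi.single i 1) a * X i = mono β a := by
  rw [mono_mul_X, tsub_add_cancel_of_le]
  intro j
  rcases eq_or_ne j i with rfl | hj
  · simpa [Nat.one_le_iff_ne_zero]
  · simp [hj]

lemma pderiv_mono (i : Fin n) (β : Fin n → ℕ) (a : ℂ) :
    pderiv i (mono β a) = mono (β - Pi.single i 1) (a * β i) := by
  rw [mono, pderiv_monomial, mono]
  refine congrArg (monomial · _) (Finsupp.ext fun j ↦ ?_)
  simp [Finsupp.single_eq_pi_single]

section Sum

variable (F : Finset (Fin n → ℕ)) (c : (Fin n → ℕ) → ℂ)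

lemma pderiv_sum_mono_of_pairwiseDisjoint
    (hdisj : (F : Set (Fin n → ℕ)).PairwiseDisjoint Function.support)
    {α : Fin n → ℕ} (hα : α ∈ F) {i : Fin n} (hi : α i ≠ 0) :
    pderiv i (∑ β ∈ F, mono β (c β)) = mono (α - Pi.single i 1) (c α * α i) := by
  rw [map_sum, Finset.sum_eq_single_of_mem α hα]
  · exact pderiv_mono i α (c α)
  · intro β hβ hne
    have hβi : β i = 0 := Function.notMem_support.mp fun h ↦
      Set.disjoint_left.mp (hdisj hβ hα hne) h hi
    rw [pderiv_mono, hβi, Nat.cast_zero, mul_zero, mono, monomial_zero]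

lemma jacobianIdeal_le_span_deltaSet :
    jacobianIdeal (∑ α ∈ F, mono α (c α)) ≤
      Ideal.span ((fun γ ↦ mono γ 1) '' deltaSet (F : Set (Fin n → ℕ))) := by
  rw [jacobianIdeal, Ideal.span_le]
  rintro _ ⟨i, rfl⟩
  simp only [SetLike.mem_coe, map_sum]
  refine Ideal.sum_mem _ fun α hα ↦ ?_
  rw [pderiv_mono, ← mul_one (c α * _), ← C_mul_mono]
  by_cases hi : α i = 0
  · simp [hi]
  · exact Ideal.mul_mem_left _ _ (Ideal.subset_span ⟨_, ⟨α, hα, i, hi, rfl⟩, rfl⟩)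

lemma span_deltaSet_le_jacobianIdeal (hc : ∀ α ∈ F, c α ≠ 0)
    (hdisj : (F : Set (Fin n → ℕ)).PairwiseDisjoint Function.support) :
    Ideal.span ((fun γ ↦ mono γ 1) '' deltaSet (F : Set (Fin n → ℕ))) ≤
      jacobianIdeal (∑ α ∈ F, mono α (c α)) := by
  rw [Ideal.span_le]
  rintro _ ⟨_, ⟨α, hα, i, hi, rfl⟩, rfl⟩
  have hcoeff : c α * α i ≠ 0 := mul_ne_zero (hc α hα) (Nat.cast_ne_zero.mpr hi)
  have h : mono (α - Pi.single i 1) 1 =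
      C (c α * α i)⁻¹ * pderiv i (∑ β ∈ F, mono β (c β)) := by
    rw [pderiv_sum_mono_of_pairwiseDisjoint F c hdisj hα hi, C_mul_mono,
      inv_mul_cancel₀ hcoeff]
  simp only [SetLike.mem_coe]
  rw [h]
  exact Ideal.mul_mem_left _ _ (pderiv_mem_jacobianIdeal _ i)

lemma sum_mono_mem_jacobianIdeal (h0 : ∀ α ∈ F, α ≠ 0)
    (hdisj : (F : Set (Fin n → ℕ)).PairwiseDisjoint Function.support) :
    ∑ α ∈ F, mono α (c α) ∈ jacobianIdeal (∑ α ∈ F, mono α (c α)) := by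
  refine Ideal.sum_mem _ fun α hα ↦ ?_
  obtain ⟨i, hi⟩ : ∃ i, α i ≠ 0 := Function.ne_iff.mp (h0 α hα)
  have h : mono α (c α) = C (α i : ℂ)⁻¹ * (pderiv i (∑ β ∈ F, mono β (c β)) * X i) := by
    rw [pderiv_sum_mono_of_pairwiseDisjoint F c hdisj hα hi, mono_sub_single_mul_X hi,
      C_mul_mono]
    field_simp
  rw [h]
  exact Ideal.mul_mem_left _ _ (Ideal.mul_mem_right _ _ (pderiv_mem_jacobianIdeal _ i))

end Sum

end ThomSebastiani

open ThomSebastiani in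
theorem thom_sebastiani_extended_jacobian_ideal_monomial_general {n : ℕ}
    (F' : Finset (Fin n → ℕ)) (c : (Fin n → ℕ) → ℂ)
    (h0 : ∀ α ∈ F', α ≠ 0) (hc : ∀ α ∈ F', c α ≠ 0)
    (hdisj : (F' : Set (Fin n → ℕ)).Pairwise fun α α' =>
      Disjoint (Function.support α) (Function.support α'))
    (f : MvPolynomial (Fin n) ℂ) (hf : f = ∑ α ∈ F', mono α (c α)) :
    jacobianIdeal f + Ideal.span {f} =
        Ideal.span ((fun γ => mono γ 1) '' deltaSet (F' : Set (Fin n → ℕ))) ∧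
      f ∈ jacobianIdeal f := by
  subst hf
  have hfJ := sum_mono_mem_jacobianIdeal F' c h0 hdisj
  refine ⟨?_, hfJ⟩
  rw [Ideal.add_eq_sup, sup_eq_left.mpr ((Ideal.span_singleton_le_iff_mem _).mpr hfJ)]
  exact le_antisymm (jacobianIdeal_le_span_deltaSet F' c)
    (span_deltaSet_le_jacobianIdeal F' c hc hdisj)

/-- For a Thom–Sebastiani polynomial `f = Σ_{α ∈ F'} c_α x^α`, the extended
Jacobian ideal `J̃_f = J_f + ⟨f⟩` equals the monomial ideal generated by
`{x^γ : γ ∈ δ(F')}`; in particular it is a monomial ideal and `f ∈ J_f`. -/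
theorem thom_sebastiani_extended_jacobian_ideal_monomial {n : ℕ}
    (F' : Finset (Fin n → ℕ)) (c : (Fin n → ℕ) → ℂ)
    (hne : F'.Nonempty) (h0 : ∀ α ∈ F', α ≠ 0) (hc : ∀ α ∈ F', c α ≠ 0)
    (hdisj : (F' : Set (Fin n → ℕ)).Pairwise fun α α' =>
      Disjoint (Function.support α) (Function.support α'))
    (f : MvPolynomial (Fin n) ℂ) (hf : f = ∑ α ∈ F', mono α (c α)) :
    jacobianIdeal f + Ideal.span {f} =
        Ideal.span ((fun γ => mono γ 1) '' deltaSet (F' : Set (Fin n → ℕ))) ∧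
      f ∈ jacobianIdeal f :=
  thom_sebastiani_extended_jacobian_ideal_monomial_general F' c h0 hc hdisj f hf
end

section
/- Let f = Σ_{α ∈ F'} c_α x^α ∈ ℂ[x₁,…,xₙ] be a Thom–Sebastiani polynomial with at least two monomials, i.e. |F'| ≥ 2. Then f is squarefree: for every g ∈ ℂ[x₁,…,xₙ], if g² divides f then g is a unit (a nonzero constant). -/
open MvPolynomial

/-!
If `p` is an irreducible factor of `g` with `g² ∣ f`, then `p` divides every partial derivative
of `f`. Differentiating along a variable `xᵢ` occurring in some `x^γ`, `γ ∈ F'`, kills every other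
monomial, so `p` divides the monomial `∂ᵢ x^γ` and hence is divisible by a variable `xⱼ`. Then
`xⱼ ∣ f`, which is impossible: `xⱼ` occurs in at most one of the (at least two) monomials of `f`.
-/

theorem Derivation.dvd_apply_of_sq_dvd {R A : Type*} [CommSemiring R] [CommRing A] [Algebra R A]
    (D : Derivation R A A) {p a : A} (h : p ^ 2 ∣ a) : p ∣ D a := by
  obtain ⟨w, rfl⟩ := h
  rw [sq, mul_assoc, D.leibniz, smul_eq_mul, smul_eq_mul]
  exact dvd_add (dvd_mul_right _ _) ((dvd_mul_right p w).mul_right _)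

namespace MvPolynomial

variable {σ R : Type*} [CommRing R]

theorem coeff_eq_zero_of_X_dvd {j : σ} {f : MvPolynomial σ R} (h : X j ∣ f) {m : σ →₀ ℕ}
    (hm : m j = 0) : coeff m f = 0 := by
  classical
  obtain ⟨t, rfl⟩ := h
  rw [coeff_X_mul', if_neg (by simpa using hm)]

theorem exists_X_dvd_of_dvd_monomial [IsDomain R] {p : MvPolynomial σ R} (hp : ¬IsUnit p)
    {s : σ →₀ ℕ} {a : R} (ha : IsUnit a) (h : p ∣ monomial s a) : ∃ j, X j ∣ p := by
  rw [← mul_one a, ← smul_eq_mul, ← smul_monomial, smul_eq_C_mul, mul_comm] at h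
  obtain ⟨m, r, -, hr, rfl⟩ := dvd_monomial_mul_iff_exists.mp h
  have hm : m ≠ 0 := by
    rintro rfl
    exact hp (by simpa using isUnit_of_dvd_unit hr (ha.map C))
  obtain ⟨j, hj⟩ := Finsupp.ne_iff.mp hm
  exact ⟨j, (X_dvd_monomial.mpr (Or.inr hj)).mul_right r⟩

end MvPolynomial

section ThomSebastiani

variable {n : ℕ} {F' : Finset (Fin n → ℕ)} {c : (Fin n → ℕ) → ℂ}

theorem coeff_sum_mono {β : Fin n → ℕ} (hβ : β ∈ F') :
    coeff (Finsupp.equivFunOnFinite.symm β) (∑ α ∈ F', mono α (c α)) = c β := by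
  classical
  rw [coeff_sum, Finset.sum_eq_single_of_mem β hβ]
  · simp [mono, coeff_monomial]
  · intro γ _ hne
    simp [mono, coeff_monomial, Finsupp.equivFunOnFinite.symm.injective.ne hne]

theorem pderiv_sum_mono
    (hdisj : (F' : Set (Fin n → ℕ)).Pairwise fun α α' =>
      Disjoint (Function.support α) (Function.support α'))
    {γ : Fin n → ℕ} (hγ : γ ∈ F') {i : Fin n} (hi : γ i ≠ 0) :
    pderiv i (∑ α ∈ F', mono α (c α)) =
      monomial (Finsupp.equivFunOnFinite.symm γ - Finsupp.single i 1) (c γ * γ i) := by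
  rw [map_sum, Finset.sum_eq_single_of_mem γ hγ]
  · simp [mono, pderiv_monomial]
  · intro α hα hne
    have hαi : α i = 0 := Function.notMem_support.mp
      fun h => Set.disjoint_left.mp (hdisj hα hγ hne) h hi
    simp [mono, pderiv_monomial, hαi]

theorem not_X_dvd_sum_mono (hcard : 2 ≤ F'.card) (hc : ∀ α ∈ F', c α ≠ 0)
    (hdisj : (F' : Set (Fin n → ℕ)).Pairwise fun α α' =>
      Disjoint (Function.support α) (Function.support α'))
    (j : Fin n) : ¬X j ∣ ∑ α ∈ F', mono α (c α) := by
  intro hX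
  obtain ⟨β, hβ, hβj⟩ : ∃ β ∈ F', β j = 0 := by
    obtain ⟨α, hα, α', hα', hne⟩ := Finset.one_lt_card.mp hcard
    by_contra! h
    exact Set.disjoint_left.mp (hdisj hα hα' hne) (h α hα) (h α' hα')
  exact hc β hβ ((coeff_sum_mono hβ).symm.trans (coeff_eq_zero_of_X_dvd hX (by simpa using hβj)))

end ThomSebastiani

/-- A Thom–Sebastiani polynomial with at least two monomials is squarefree:
any `g` with `g² ∣ f` is a unit. -/
theorem thom_sebastiani_squarefree {n : ℕ}
    (F' : Finset (Fin n → ℕ)) (c : (Fin n → ℕ) → ℂ)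
    (hcard : 2 ≤ F'.card) (h0 : ∀ α ∈ F', α ≠ 0) (hc : ∀ α ∈ F', c α ≠ 0)
    (hdisj : (F' : Set (Fin n → ℕ)).Pairwise fun α α' =>
      Disjoint (Function.support α) (Function.support α'))
    (f : MvPolynomial (Fin n) ℂ) (hf : f = ∑ α ∈ F', mono α (c α)) :
    ∀ g : MvPolynomial (Fin n) ℂ, g ^ 2 ∣ f → IsUnit g := by
  intro g hg
  obtain ⟨γ, hγ⟩ := Finset.card_pos.mp (by omega : 0 < F'.card)
  obtain ⟨i, hi⟩ := Function.ne_iff.mp (h0 γ hγ)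
  have hX : ∀ j, ¬X j ∣ f := hf ▸ not_X_dvd_sum_mono hcard hc hdisj
  by_contra hg_unit
  have hg0 : g ≠ 0 := by
    rintro rfl
    rw [zero_pow two_ne_zero, zero_dvd_iff] at hg
    exact hX i (hg ▸ dvd_zero _)
  obtain ⟨p, hp, hpg⟩ := WfDvdMonoid.exists_irreducible_factor hg_unit hg0
  have hp2 : p ^ 2 ∣ f := (pow_dvd_pow_of_dvd hpg 2).trans hg
  have hpd : p ∣ pderiv i f := (pderiv i).dvd_apply_of_sq_dvd hp2
  rw [hf, pderiv_sum_mono hdisj hγ hi] at hpd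
  obtain ⟨j, hXj⟩ := exists_X_dvd_of_dvd_monomial hp.not_isUnit
    (isUnit_iff_ne_zero.mpr (mul_ne_zero (hc γ hγ) (Nat.cast_ne_zero.mpr hi))) hpd
  exact hX j (hXj.trans ((dvd_pow_self p two_ne_zero).trans hp2))
end

section
/- Let α ∈ ℕ^n with α ≠ 0 and let f = x^α ∈ ℂ[x₁,…,xₙ]. A derivation θ = Σ_{i=1}^n g_i · ∂/∂x_i (g_i ∈ ℂ[x₁,…,xₙ]) satisfies θ(x^α) = 0 if and only if θ belongs to the ℂ[x₁,…,xₙ]-submodule of derivations generated by the derivations α_j · x_i · ∂/∂x_i − α_i · x_j · ∂/∂x_j for i, j ∈ [α], together with the derivations ∂/∂x_k for k ∉ [α]. -/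
/-!
Euler's identity `xᵢ ∂ᵢ x^α = αᵢ x^α` shows that `(x₁ ⋯ xₙ) θ(x^α) = x^α Σᵢ αᵢ gᵢ ∏_{k ≠ i} x_k`.
Hence `θ(x^α) = 0` forces `xᵢ ∣ αᵢ gᵢ ∏_{k ≠ i} x_k`, and since `xᵢ` is prime, `xᵢ ∣ gᵢ` for
every `i ∈ [α]`. Writing `gᵢ = xᵢ qᵢ` there, the condition becomes the single linear relation
`Σᵢ αᵢ qᵢ = 0`, and the solutions of a linear relation with an invertible coefficient `α_{i₀}`
are spanned by the vectors `α_j eᵢ - αᵢ e_j`. The coordinates `k ∉ [α]` are unconstrained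
because `∂ₖ x^α = 0`.
-/

open MvPolynomial

open Finset Submodule

variable {ι σ R K M : Type*}

theorem sum_smul_mem_span_smul_sub_smul [CommRing R] [AddCommGroup M] [Module R M]
    {s : Finset ι} {a q : ι → R} (e : ι → M) {i₀ : ι} (hi₀ : i₀ ∈ s) (ha : IsUnit (a i₀))
    (hq : ∑ i ∈ s, q i * a i = 0) :
    ∑ i ∈ s, q i • e i ∈ span R {v | ∃ i ∈ s, ∃ j ∈ s, v = a j • e i - a i • e j} := by
  obtain ⟨u, hu⟩ := ha
  have hdecomp : ∑ i ∈ s, q i • e i = ∑ i ∈ s, (↑u⁻¹ * q i) • (a i₀ • e i - a i • e i₀) := by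
    simp only [smul_sub, smul_smul, sum_sub_distrib, ← sum_smul, mul_assoc, ← mul_sum, hq,
      mul_zero, zero_smul, sub_zero, ← hu, mul_left_comm _ _ (u : R), Units.inv_mul, mul_one]
  rw [hdecomp]
  exact sum_mem fun i hi => smul_mem _ _ (subset_span ⟨i, hi, i₀, hi₀, rfl⟩)

namespace MvPolynomial

def annihilatorGenerators [CommRing R] [DecidableEq σ] (s : σ →₀ ℕ) :
    Set (σ → MvPolynomial σ R) :=
  {v | ∃ i j, s i ≠ 0 ∧ s j ≠ 0 ∧
      v = Pi.single i (C (s j : R) * X i) - Pi.single j (C (s i : R) * X j)} ∪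
    {v | ∃ k, s k = 0 ∧ v = Pi.single k 1}

theorem pderiv_monomial_of_apply_eq_zero [CommSemiring R] {s : σ →₀ ℕ} {i : σ} (hi : s i = 0)
    (c : R) : pderiv i (monomial s c) = 0 := by
  rw [pderiv_monomial, hi, Nat.cast_zero, mul_zero, monomial_zero]

theorem X_mul_pderiv_monomial_eq_C_mul [CommSemiring R] (i : σ) (s : σ →₀ ℕ) (c : R) :
    X i * pderiv i (monomial s c) = C (s i : R) * monomial s c := by
  rw [X_mul_pderiv_monomial, nsmul_eq_mul, map_natCast]

theorem sum_mul_pderiv_monomial_eq_zero_of_mem_span [CommRing R] [Fintype σ] [DecidableEq σ]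
    {s : σ →₀ ℕ} (c : R) {g : σ → MvPolynomial σ R}
    (hg : g ∈ span (MvPolynomial σ R) (annihilatorGenerators s)) :
    ∑ i, g i * pderiv i (monomial s c) = 0 := by
  have hle : span (MvPolynomial σ R) (annihilatorGenerators s) ≤ LinearMap.ker
      (Fintype.linearCombination (MvPolynomial σ R) fun i => pderiv i (monomial s c)) := by
    rw [span_le]
    rintro _ (⟨i, j, -, -, rfl⟩ | ⟨k, hk, rfl⟩)
    · simp only [SetLike.mem_coe, LinearMap.mem_ker, Fintype.linearCombination_apply,
        Pi.sub_apply, smul_eq_mul, sub_mul, sum_sub_distrib, Pi.single_apply, ite_mul, zero_mul,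
        sum_ite_eq', mem_univ, if_true, mul_assoc, X_mul_pderiv_monomial_eq_C_mul]
      ring
    · simp only [SetLike.mem_coe, LinearMap.mem_ker, Fintype.linearCombination_apply,
        smul_eq_mul, Pi.single_apply, ite_mul, one_mul, zero_mul, sum_ite_eq', mem_univ, if_true]
      exact pderiv_monomial_of_apply_eq_zero hk c
  simpa [Fintype.linearCombination_apply] using hle hg

theorem X_dvd_of_sum_mul_pderiv_monomial_eq_zero [Field K] [CharZero K] [Fintype σ]
    [DecidableEq σ] {s : σ →₀ ℕ} {c : K} (hc : c ≠ 0) {g : σ → MvPolynomial σ K}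
    (h : ∑ j, g j * pderiv j (monomial s c) = 0) {i : σ} (hi : s i ≠ 0) : X i ∣ g i := by
  have hcleared : ∑ j, C (s j : K) * g j * ∏ k ∈ univ.erase j, X k = 0 := by
    refine (mul_eq_zero.mp ?_).resolve_left (monomial_eq_zero (s := s).not.mpr hc)
    calc monomial s c * ∑ j, C (s j : K) * g j * ∏ k ∈ univ.erase j, X k
        = (∏ k, X k) * ∑ j, g j * pderiv j (monomial s c) := by
          rw [mul_sum, mul_sum]
          refine sum_congr rfl fun j _ => ?_
          rw [← mul_prod_erase univ X (mem_univ j)]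
          linear_combination
            -(g j * ∏ k ∈ univ.erase j, X k) * X_mul_pderiv_monomial_eq_C_mul j s c
      _ = 0 := by rw [h, mul_zero]
  have hdvd : X i ∣ C (s i : K) * g i * ∏ k ∈ univ.erase i, X k := by
    rw [← add_sum_erase univ _ (mem_univ i), add_eq_zero_iff_eq_neg] at hcleared
    rw [hcleared, dvd_neg]
    exact dvd_sum fun j hj => dvd_mul_of_dvd_right
      (dvd_prod_of_mem _ (mem_erase.mpr ⟨(ne_of_mem_erase hj).symm, mem_univ i⟩)) _
  have hunit : IsUnit (C (s i : K) : MvPolynomial σ K) :=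
    (Nat.cast_ne_zero.mpr hi).isUnit.map C
  rcases X_prime.dvd_or_dvd hdvd with hg | hprod
  · exact hunit.dvd_mul_left.mp hg
  · obtain ⟨k, hk, hik⟩ := (X_prime.dvd_finsetProd_iff _).mp hprod
    exact absurd (X_dvd_X.mp hik) (ne_of_mem_erase hk).symm

theorem mem_span_annihilatorGenerators_of_sum_mul_pderiv_monomial_eq_zero [Field K] [CharZero K]
    [Fintype σ] [DecidableEq σ] {s : σ →₀ ℕ} (hs : s ≠ 0) {c : K} (hc : c ≠ 0)
    {g : σ → MvPolynomial σ K} (h : ∑ j, g j * pderiv j (monomial s c) = 0) :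
    g ∈ span (MvPolynomial σ K) (annihilatorGenerators s) := by
  obtain ⟨i₀, hi₀⟩ : ∃ i, s i ≠ 0 := Finsupp.ne_iff.mp hs
  have hdvd : ∀ i, ∃ q, s i ≠ 0 → g i = X i * q := fun i => by
    by_cases hi : s i = 0
    · exact ⟨0, fun h => absurd hi h⟩
    · obtain ⟨q, hq⟩ := X_dvd_of_sum_mul_pderiv_monomial_eq_zero hc h hi
      exact ⟨q, fun _ => hq⟩
  choose q hq using hdvd
  have hrel : ∑ i ∈ s.support, q i * C (s i : K) = 0 := by
    refine (mul_eq_zero.mp ?_).resolve_right (monomial_eq_zero (s := s).not.mpr hc)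
    rw [← h, sum_mul, ← sum_subset (subset_univ s.support) fun j _ hj => by
      rw [pderiv_monomial_of_apply_eq_zero (Finsupp.notMem_support_iff.mp hj), mul_zero]]
    refine sum_congr rfl fun i hi => ?_
    rw [hq i (Finsupp.mem_support_iff.mp hi)]
    linear_combination -q i * X_mul_pderiv_monomial_eq_C_mul i s c
  rw [← univ_sum_single g, ← sum_add_sum_compl s.support]
  refine add_mem ?_ (sum_mem fun k hk => ?_)
  · have hsupp : ∑ i ∈ s.support, Pi.single i (g i) = ∑ i ∈ s.support, q i • Pi.single i (X i) :=
      sum_congr rfl fun i hi => by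
        rw [hq i (Finsupp.mem_support_iff.mp hi), ← Pi.single_smul, smul_eq_mul, mul_comm]
    rw [hsupp]
    refine span_mono ?_ (sum_smul_mem_span_smul_sub_smul (fun i => Pi.single i (X i))
      (Finsupp.mem_support_iff.mpr hi₀) ((Nat.cast_ne_zero.mpr hi₀).isUnit.map C) hrel)
    rintro _ ⟨i, hi, j, hj, rfl⟩
    refine Or.inl ⟨i, j, Finsupp.mem_support_iff.mp hi, Finsupp.mem_support_iff.mp hj, ?_⟩
    simp only [← Pi.single_smul, smul_eq_mul]
  · rw [← mul_one (g k), ← smul_eq_mul, Pi.single_smul]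
    have hk : s k = 0 := Finsupp.notMem_support_iff.mp (mem_compl.mp hk)
    exact smul_mem _ _ (subset_span (Or.inr ⟨k, hk, rfl⟩))

end MvPolynomial

/-- A derivation `θ = Σ_i g_i ∂/∂x_i` (identified with its coefficient vector
`g`) annihilates the monomial `x^α` (`α ≠ 0`) if and only if it lies in the
submodule generated by the derivations `α_j x_i ∂/∂x_i − α_i x_j ∂/∂x_j`
(`i, j ∈ [α]`) and `∂/∂x_k` (`k ∉ [α]`). -/
theorem annihilator_of_monomial {n : ℕ} (α : Fin n → ℕ) (hα : α ≠ 0)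
    (g : Fin n → MvPolynomial (Fin n) ℂ) :
    (∑ i, g i * pderiv i (mono α 1)) = 0 ↔
      g ∈ Submodule.span (MvPolynomial (Fin n) ℂ)
        ({v : Fin n → MvPolynomial (Fin n) ℂ |
            ∃ i j : Fin n, α i ≠ 0 ∧ α j ≠ 0 ∧
              v = Pi.single i (MvPolynomial.C ((α j : ℕ) : ℂ) * X i) -
                  Pi.single j (MvPolynomial.C ((α i : ℕ) : ℂ) * X j)} ∪
          {v : Fin n → MvPolynomial (Fin n) ℂ |
            ∃ k : Fin n, α k = 0 ∧ v = Pi.single k 1}) := by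
  have hs : Finsupp.equivFunOnFinite.symm α ≠ 0 := fun h => hα (congrArg DFunLike.coe h)
  exact ⟨mem_span_annihilatorGenerators_of_sum_mul_pderiv_monomial_eq_zero hs one_ne_zero,
    sum_mul_pderiv_monomial_eq_zero_of_mem_span (s := Finsupp.equivFunOnFinite.symm α) 1⟩
end
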